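/- arXiv:2307.15548 — 5 statements merged into one kernel-verified Lean document; each statement's English description precedes it below -/
import Mathlib

section
/- For m₁, m₂, L > 0, one has the identity ∑_{n=1}^{∞} [ (m₁² − m₂²)/((nπ/L)² + m₂²) − log( ((nπ/L)² + m₁²)/((nπ/L)² + m₂²) ) ] = (1/2)[ (1 − m₁²/m₂²) + L(m₁² − m₂²)/(m₂ tanh(L m₂)) − 2 log( (m₂ sinh(L m₁))/(m₁ sinh(L m₂)) ) ]. -/
/-!
Put `λₙ = ((n + 1)π / L)²`. The summand splits as
`(m₁² - m₂²) / (λₙ + m₂²) - log (1 + m₁² / λₙ) + log (1 + m₂² / λₙ)`, and each piece sums on its own: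
the logarithms by the Euler product `sinh (π t) / (π t) = ∏ₖ (1 + t² / k²)`, the first term by the
partial fraction expansion `π coth (π t) = 1 / t + ∑ₖ 2 t / (k² + t²)`. Both are the sine product and
the cotangent series evaluated at the imaginary point `t i`; the scaling `t = L m / π` turns them into
the stated closed form.
-/

open Real Filter Finset Topology

namespace Real

theorem tendsto_euler_sinh_prod (t : ℝ) :
    Tendsto (fun N : ℕ => π * t * ∏ j ∈ range N, (1 + t ^ 2 / ((j : ℝ) + 1) ^ 2))
      atTop (𝓝 (sinh (π * t))) := by
  have h := (Complex.tendsto_euler_sin_prod (t * Complex.I)).mul_const (-Complex.I)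
  rw [← tendsto_ofReal_iff]
  convert h using 2 with N
  · have hfactor (j : ℕ) : (1 : ℂ) - (t * Complex.I) ^ 2 / ((j : ℂ) + 1) ^ 2
        = ((1 + t ^ 2 / ((j : ℝ) + 1) ^ 2 : ℝ) : ℂ) := by
      push_cast
      linear_combination (-(t : ℂ) ^ 2 / ((j : ℂ) + 1) ^ 2) * Complex.I_sq
    simp_rw [hfactor, Complex.ofReal_mul, Complex.ofReal_prod]
    linear_combination
      (π * t * ∏ j ∈ range N, ((1 + t ^ 2 / ((j : ℝ) + 1) ^ 2 : ℝ) : ℂ)) * Complex.I_sq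
  · rw [← mul_assoc, Complex.sin_mul_I, Complex.ofReal_sinh, Complex.ofReal_mul]
    linear_combination Complex.sinh (π * t) * Complex.I_sq

theorem hasSum_log_one_add_sq_div_sq {t : ℝ} (ht : t ≠ 0) :
    HasSum (fun n : ℕ => log (1 + t ^ 2 / ((n : ℝ) + 1) ^ 2)) (log (sinh (π * t) / (π * t))) := by
  have hπt : π * t ≠ 0 := mul_ne_zero pi_ne_zero ht
  have hprod : Tendsto (fun N : ℕ => ∏ j ∈ range N, (1 + t ^ 2 / ((j : ℝ) + 1) ^ 2))
      atTop (𝓝 (sinh (π * t) / (π * t))) :=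
    ((tendsto_euler_sinh_prod t).div_const (π * t)).congr fun N => by field_simp
  have hlim : 0 < sinh (π * t) / (π * t) := by
    rcases hπt.lt_or_gt with h | h
    · exact div_pos_of_neg_of_neg (sinh_neg_iff.mpr h) h
    · exact div_pos (sinh_pos_iff.mpr h) h
  have hfactor (n : ℕ) : 1 ≤ 1 + t ^ 2 / ((n : ℝ) + 1) ^ 2 :=
    le_add_of_nonneg_right (by positivity)
  rw [hasSum_iff_tendsto_nat_of_nonneg fun n => log_nonneg (hfactor n)]
  simp_rw [← log_prod fun n _ => (zero_lt_one.trans_le (hfactor n)).ne']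
  exact ((continuousAt_log hlim.ne').tendsto).comp hprod

theorem hasSum_one_div_sq_add_sq {t : ℝ} (ht : t ≠ 0) :
    HasSum (fun n : ℕ => 1 / (((n : ℝ) + 1) ^ 2 + t ^ 2))
      (π / (2 * t * tanh (π * t)) - 1 / (2 * t ^ 2)) := by
  have hx : (t * Complex.I : ℂ) ∈ Complex.integerComplement := by
    rintro ⟨n, hn⟩
    exact ht (by simpa using (congrArg Complex.im hn).symm)
  have hc : (-2 * t * Complex.I : ℂ) ≠ 0 := by simp [ht]
  have hterm (n : ℕ) : cotTerm (t * Complex.I) n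
      = -2 * t * Complex.I * ((1 / (((n : ℝ) + 1) ^ 2 + t ^ 2) : ℝ) : ℂ) := by
    have hprod : (t * Complex.I + (n + 1)) * (t * Complex.I - (n + 1))
        = -(((n : ℝ) + 1) ^ 2 + t ^ 2 : ℝ) := by
      push_cast
      linear_combination (t : ℂ) ^ 2 * Complex.I_sq
    rw [cotTerm_identity hx, hprod, one_div_neg_eq_neg_one_div]
    push_cast
    ring
  have hsum : π * Complex.cot (π * (t * Complex.I)) - 1 / (t * Complex.I)
      = -2 * t * Complex.I * ((π / (2 * t * tanh (π * t)) - 1 / (2 * t ^ 2) : ℝ) : ℂ) := by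
    have hs : Complex.sinh (π * t) ≠ 0 := by
      exact_mod_cast (by simp [ht, pi_ne_zero] : sinh (π * t) ≠ 0)
    have ht' : (t : ℂ) ≠ 0 := by exact_mod_cast ht
    rw [← mul_assoc, ← Complex.ofReal_mul, Complex.cot_eq_cos_div_sin, Complex.cos_mul_I,
      Complex.sin_mul_I, tanh_eq_sinh_div_cosh]
    push_cast
    field_simp
    rw [Complex.I_sq]
    ring
  rw [← Complex.hasSum_ofReal, ← hasSum_mul_left_iff hc, ← hsum]
  simpa only [hterm, cot_series_rep' hx] using (summable_cotTerm hx).hasSum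

end Real

/-- Indexed from `n = 0`: the `n`-th value is the `(n + 1)`-st Dirichlet eigenvalue on `(0, L)`. -/
noncomputable def dirichletEigenvalue (L : ℝ) (n : ℕ) : ℝ := (((n : ℝ) + 1) * π / L) ^ 2

theorem dirichletEigenvalue_pos {L : ℝ} (hL : L ≠ 0) (n : ℕ) : 0 < dirichletEigenvalue L n := by
  have : ((n : ℝ) + 1) * π / L ≠ 0 := by positivity
  unfold dirichletEigenvalue
  positivity

theorem hasSum_one_div_dirichletEigenvalue_add_sq {L m : ℝ} (hL : L ≠ 0) (hm : m ≠ 0) :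
    HasSum (fun n : ℕ => 1 / (dirichletEigenvalue L n + m ^ 2))
      (L / (2 * m * tanh (L * m)) - 1 / (2 * m ^ 2)) := by
  have ht : L * m / π ≠ 0 := by positivity
  have h := ((hasSum_one_div_sq_add_sq ht).mul_left ((L / π) ^ 2)).congr_fun
    (g := fun n => 1 / (dirichletEigenvalue L n + m ^ 2)) fun n => by
      rw [dirichletEigenvalue]
      field_simp
  have hval : (L / π) ^ 2 * (π / (2 * (L * m / π) * tanh (L * m)) - 1 / (2 * (L * m / π) ^ 2))
      = L / (2 * m * tanh (L * m)) - 1 / (2 * m ^ 2) := by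
    field_simp
  rwa [mul_div_cancel₀ _ pi_ne_zero, hval] at h

theorem hasSum_log_one_add_sq_div_dirichletEigenvalue {L m : ℝ} (hL : L ≠ 0) (hm : m ≠ 0) :
    HasSum (fun n : ℕ => log (1 + m ^ 2 / dirichletEigenvalue L n))
      (log (sinh (L * m) / (L * m))) := by
  have ht : L * m / π ≠ 0 := by positivity
  have h := (hasSum_log_one_add_sq_div_sq ht).congr_fun
    (g := fun n => log (1 + m ^ 2 / dirichletEigenvalue L n)) fun n => by
      rw [dirichletEigenvalue]
      field_simp
  rwa [mul_div_cancel₀ _ pi_ne_zero] at h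

/-- Closed-form evaluation of the Dirichlet relative-entropy series in one dimension. -/
theorem dirichlet_relEntropy_closed_form (m₁ m₂ L : ℝ)
    (h₁ : 0 < m₁) (h₂ : 0 < m₂) (hL : 0 < L) :
    ∑' n : ℕ,
        ((m₁ ^ 2 - m₂ ^ 2) / ((((n : ℝ) + 1) * π / L) ^ 2 + m₂ ^ 2)
          - Real.log (((((n : ℝ) + 1) * π / L) ^ 2 + m₁ ^ 2)
              / ((((n : ℝ) + 1) * π / L) ^ 2 + m₂ ^ 2)))
      = (1 / 2) * ((1 - m₁ ^ 2 / m₂ ^ 2)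
          + L * (m₁ ^ 2 - m₂ ^ 2) / (m₂ * Real.tanh (L * m₂))
          - 2 * Real.log ((m₂ * Real.sinh (L * m₁)) / (m₁ * Real.sinh (L * m₂)))) := by
  have hlog_ratio (n : ℕ) :
      log ((dirichletEigenvalue L n + m₁ ^ 2) / (dirichletEigenvalue L n + m₂ ^ 2))
        = log (1 + m₁ ^ 2 / dirichletEigenvalue L n) - log (1 + m₂ ^ 2 / dirichletEigenvalue L n) := by
    have hpos := dirichletEigenvalue_pos hL.ne' n
    rw [← log_div (by positivity) (by positivity)]
    congr 1
    field_simp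
  have hlog_sinh : log (sinh (L * m₁) / (L * m₁)) - log (sinh (L * m₂) / (L * m₂))
      = log ((m₂ * sinh (L * m₁)) / (m₁ * sinh (L * m₂))) := by
    have hs₁ : 0 < sinh (L * m₁) := sinh_pos_iff.mpr (by positivity)
    have hs₂ : 0 < sinh (L * m₂) := sinh_pos_iff.mpr (by positivity)
    rw [← log_div (by positivity) (by positivity)]
    congr 1
    field_simp
  have hsum := ((hasSum_one_div_dirichletEigenvalue_add_sq hL.ne' h₂.ne').mul_left
      (m₁ ^ 2 - m₂ ^ 2)).sub ((hasSum_log_one_add_sq_div_dirichletEigenvalue hL.ne' h₁.ne').sub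
      (hasSum_log_one_add_sq_div_dirichletEigenvalue hL.ne' h₂.ne'))
  simp only [← hlog_ratio, hlog_sinh] at hsum
  convert hsum.tsum_eq using 1
  · congr 1
    funext n
    unfold dirichletEigenvalue
    ring
  · field_simp
    ring
end

section
/- For m₁, m₂ > 0, the improper integral (1/2)∫_{ℝ} (dp/2π) [ (m₁² − m₂²)/(p² + m₂²) − log( (p² + m₁²)/(p² + m₂²) ) ] converges and equals (m₁ − m₂)²/(4 m₂). -/
/-!
Split the logarithm as `log (p² + m₁²) - log (p² + m₂²)`. The rational term integrates to
`π (m₁² - m₂²) / m₂`. Since `|log x - log y| ≤ |x - y| / m` on `[m, ∞)`, the logarithmic term is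
dominated by a multiple of `1 / (p² + min m₁ m₂ ²)`, hence integrable, and `p` times it still
tends to `0` at `±∞`. With the primitive `p log (p² + c²) - 2p + 2c arctan (p / c)` of
`log (p² + c²)`, only the arctangents survive at `±∞`, so the logarithmic term integrates to
`2π (m₁ - m₂)`, and the integral of the whole integrand is `π (m₁ - m₂)² / m₂`.
-/

open Real MeasureTheory Filter Topology

lemma inv_sq_add_sq_eq {c : ℝ} (hc : c ≠ 0) (p : ℝ) :
    (p ^ 2 + c ^ 2)⁻¹ = (c ^ 2)⁻¹ * (1 + (c⁻¹ * p) ^ 2)⁻¹ := by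
  field_simp
  ring

lemma integrable_inv_sq_add_sq {c : ℝ} (hc : c ≠ 0) :
    Integrable fun p : ℝ => (p ^ 2 + c ^ 2)⁻¹ := by
  simp_rw [inv_sq_add_sq_eq hc]
  exact (integrable_inv_one_add_sq.comp_mul_left' (inv_ne_zero hc)).const_mul _

lemma integral_univ_inv_sq_add_sq {c : ℝ} (hc : c ≠ 0) :
    ∫ p : ℝ, (p ^ 2 + c ^ 2)⁻¹ = π / |c| := by
  simp_rw [inv_sq_add_sq_eq hc, integral_const_mul,
    Measure.integral_comp_inv_mul_left (fun x : ℝ => (1 + x ^ 2)⁻¹) c,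
    integral_univ_inv_one_add_sq, smul_eq_mul, ← sq_abs c]
  field_simp

lemma Real.abs_log_sub_log_le {x y m : ℝ} (hm : 0 < m) (hx : m ≤ x) (hy : m ≤ y) :
    |log x - log y| ≤ |x - y| / m := by
  wlog hyx : y ≤ x generalizing x y
  · simpa only [abs_sub_comm] using this hy hx (le_of_not_ge hyx)
  have hy0 : 0 < y := hm.trans_le hy
  rw [abs_of_nonneg (sub_nonneg.2 (log_le_log hy0 hyx)), abs_of_nonneg (sub_nonneg.2 hyx),
    ← log_div (hm.trans_le hx).ne' hy0.ne']
  calc log (x / y) ≤ x / y - 1 := log_le_sub_one_of_pos (div_pos (hm.trans_le hx) hy0)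
    _ = (x - y) / y := by field_simp
    _ ≤ (x - y) / m := div_le_div_of_nonneg_left (sub_nonneg.2 hyx) hm hy

lemma hasDerivAt_log_sq_add_sq_primitive {c : ℝ} (hc : c ≠ 0) (p : ℝ) :
    HasDerivAt (fun p => p * log (p ^ 2 + c ^ 2) - 2 * p + 2 * c * arctan (p / c))
      (log (p ^ 2 + c ^ 2)) p := by
  have hpc : p ^ 2 + c ^ 2 ≠ 0 := by positivity
  have hlog : HasDerivAt (fun p => log (p ^ 2 + c ^ 2)) (2 * p / (p ^ 2 + c ^ 2)) p := by
    simpa using ((hasDerivAt_pow 2 p).add_const (c ^ 2)).log hpc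
  have harctan : HasDerivAt (fun p => arctan (p / c)) (1 / (1 + (p / c) ^ 2) * (1 / c)) p := by
    simpa [Function.comp_def] using
      (hasDerivAt_arctan (p / c)).comp p ((hasDerivAt_id p).div_const c)
  refine ((((hasDerivAt_id' p).mul hlog).sub ((hasDerivAt_id' p).const_mul 2)).add
    (harctan.const_mul (2 * c))).congr_deriv ?_
  field_simp
  ring

lemma tendsto_arctan_div_atTop {c : ℝ} (hc : 0 < c) :
    Tendsto (fun p => arctan (p / c)) atTop (𝓝 (π / 2)) :=
  (tendsto_nhds_of_tendsto_nhdsWithin tendsto_arctan_atTop).comp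
    (tendsto_id.atTop_div_const hc)

lemma tendsto_arctan_div_atBot {c : ℝ} (hc : 0 < c) :
    Tendsto (fun p => arctan (p / c)) atBot (𝓝 (-(π / 2))) :=
  (tendsto_nhds_of_tendsto_nhdsWithin tendsto_arctan_atBot).comp
    (tendsto_id.atBot_div_const hc)

section LogDifference

variable {a b : ℝ}

lemma abs_log_sq_add_sq_sub_log_le {c : ℝ} (hc : 0 < c) (hca : c ≤ a) (hcb : c ≤ b) (p : ℝ) :
    |log (p ^ 2 + a ^ 2) - log (p ^ 2 + b ^ 2)| ≤ |a ^ 2 - b ^ 2| / (p ^ 2 + c ^ 2) := by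
  have hpa : p ^ 2 + c ^ 2 ≤ p ^ 2 + a ^ 2 := by gcongr
  have hpb : p ^ 2 + c ^ 2 ≤ p ^ 2 + b ^ 2 := by gcongr
  simpa only [add_sub_add_left_eq_sub] using abs_log_sub_log_le (by positivity) hpa hpb

lemma integrable_log_sq_add_sq_sub_log (ha : 0 < a) (hb : 0 < b) :
    Integrable fun p : ℝ => log (p ^ 2 + a ^ 2) - log (p ^ 2 + b ^ 2) := by
  have hc : 0 < min a b := lt_min ha hb
  refine ((integrable_inv_sq_add_sq hc.ne').const_mul |a ^ 2 - b ^ 2|).mono' ?_ ?_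
  · exact Continuous.aestronglyMeasurable (by fun_prop (disch := intro p; positivity))
  · filter_upwards with p
    simpa only [norm_eq_abs, div_eq_mul_inv] using
      abs_log_sq_add_sq_sub_log_le hc (min_le_left a b) (min_le_right a b) p

lemma tendsto_mul_log_sq_add_sq_sub_log_cocompact (ha : 0 < a) (hb : 0 < b) :
    Tendsto (fun p : ℝ => p * (log (p ^ 2 + a ^ 2) - log (p ^ 2 + b ^ 2)))
      (cocompact ℝ) (𝓝 0) := by
  have hc : 0 < min a b := lt_min ha hb
  refine squeeze_zero_norm' (a := fun p => |a ^ 2 - b ^ 2| / |p|) ?_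
    (tendsto_const_nhds.div_atTop tendsto_norm_cocompact_atTop)
  filter_upwards [tendsto_norm_cocompact_atTop.eventually_gt_atTop 0] with p hp
  rw [norm_eq_abs] at hp
  rw [norm_mul, norm_eq_abs, norm_eq_abs]
  calc |p| * |log (p ^ 2 + a ^ 2) - log (p ^ 2 + b ^ 2)|
      ≤ |p| * (|a ^ 2 - b ^ 2| / (p ^ 2 + min a b ^ 2)) := by
        gcongr
        exact abs_log_sq_add_sq_sub_log_le hc (min_le_left a b) (min_le_right a b) p
    _ ≤ |a ^ 2 - b ^ 2| / |p| := by
        rw [mul_div_assoc', div_le_div_iff₀ (by positivity) hp]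
        nlinarith [abs_nonneg (a ^ 2 - b ^ 2), sq_abs p, sq_nonneg (min a b)]

lemma integral_log_sq_add_sq_sub_log (ha : 0 < a) (hb : 0 < b) :
    ∫ p : ℝ, (log (p ^ 2 + a ^ 2) - log (p ^ 2 + b ^ 2)) = 2 * π * (a - b) := by
  -- the difference of the two primitives, whose `-2p` terms cancel
  have hF : ∀ p, HasDerivAt (fun p => p * (log (p ^ 2 + a ^ 2) - log (p ^ 2 + b ^ 2))
      + 2 * a * arctan (p / a) - 2 * b * arctan (p / b))
      (log (p ^ 2 + a ^ 2) - log (p ^ 2 + b ^ 2)) p := fun p =>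
    ((hasDerivAt_log_sq_add_sq_primitive ha.ne' p).sub
      (hasDerivAt_log_sq_add_sq_primitive hb.ne' p)).congr_of_eventuallyEq
      (Eventually.of_forall fun q => by simp only [Pi.sub_apply]; ring)
  have hdecay := tendsto_mul_log_sq_add_sq_sub_log_cocompact ha hb
  have htop := ((hdecay.mono_left atTop_le_cocompact).add
    ((tendsto_arctan_div_atTop ha).const_mul (2 * a))).sub
    ((tendsto_arctan_div_atTop hb).const_mul (2 * b))
  have hbot := ((hdecay.mono_left atBot_le_cocompact).add
    ((tendsto_arctan_div_atBot ha).const_mul (2 * a))).sub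
    ((tendsto_arctan_div_atBot hb).const_mul (2 * b))
  rw [integral_of_hasDerivAt_of_tendsto hF (integrable_log_sq_add_sq_sub_log ha hb) hbot htop]
  ring

end LogDifference

/-- The infinite-volume relative entropy density in one dimension:
the integrand is integrable over `ℝ` and the integral equals `(m₁ - m₂)²/(4 m₂)`. -/
theorem relEntropy_density_one_dim (m₁ m₂ : ℝ) (h₁ : 0 < m₁) (h₂ : 0 < m₂) :
    Integrable (fun p : ℝ =>
        (m₁ ^ 2 - m₂ ^ 2) / (p ^ 2 + m₂ ^ 2)
          - Real.log ((p ^ 2 + m₁ ^ 2) / (p ^ 2 + m₂ ^ 2))) ∧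
      (1 / 2) * ∫ p : ℝ, (1 / (2 * π)) *
          ((m₁ ^ 2 - m₂ ^ 2) / (p ^ 2 + m₂ ^ 2)
            - Real.log ((p ^ 2 + m₁ ^ 2) / (p ^ 2 + m₂ ^ 2)))
        = (m₁ - m₂) ^ 2 / (4 * m₂) := by
  have hsplit : (fun p : ℝ => (m₁ ^ 2 - m₂ ^ 2) / (p ^ 2 + m₂ ^ 2)
      - log ((p ^ 2 + m₁ ^ 2) / (p ^ 2 + m₂ ^ 2))) = fun p =>
      (m₁ ^ 2 - m₂ ^ 2) * (p ^ 2 + m₂ ^ 2)⁻¹ - (log (p ^ 2 + m₁ ^ 2) - log (p ^ 2 + m₂ ^ 2)) := by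
    ext p
    rw [div_eq_mul_inv, log_div (by positivity) (by positivity)]
  have hrational := (integrable_inv_sq_add_sq h₂.ne').const_mul (m₁ ^ 2 - m₂ ^ 2)
  have hlog := integrable_log_sq_add_sq_sub_log h₁ h₂
  refine ⟨hsplit ▸ hrational.sub hlog, ?_⟩
  rw [integral_const_mul, hsplit, integral_sub hrational hlog, integral_const_mul,
    integral_univ_inv_sq_add_sq h₂.ne', abs_of_pos h₂, integral_log_sq_add_sq_sub_log h₁ h₂]
  field_simp
  ring
end

section
/- For m₁, m₂ > 0 and d = 3, the improper integral (1/2)∫_{ℝ³} (d³p/(2π)³) [ (m₁² − m₂²)/(|p|² + m₂²) − log( (|p|² + m₁²)/(|p|² + m₂²) ) ] converges and equals (2m₁ + m₂)(m₁ − m₂)²/(24π). -/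
/-!
In polar coordinates the integral becomes `4π ∫₀^∞ r² g(r) dr`, where `g ≥ 0` since
`log y ≤ y - 1`. The function `r² g(r)` has an elementary antiderivative (a cubic times a
difference of logarithms plus arctangents) vanishing at `0`; as `log (1 + x) = x + O(x²)`, its
limit at infinity is `(2a + b)(a - b)²π/6`, which gives both the integrability and the value of
the radial integral.
-/

open Real MeasureTheory Filter Topology Set Metric

noncomputable def relEntropyIntegrand (a b r : ℝ) : ℝ :=
  (a ^ 2 - b ^ 2) / (r ^ 2 + b ^ 2) - log ((r ^ 2 + a ^ 2) / (r ^ 2 + b ^ 2))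

lemma relEntropyIntegrand_nonneg {a b : ℝ} (ha : 0 < a) (hb : 0 < b) (r : ℝ) :
    0 ≤ relEntropyIntegrand a b r := by
  have hrb : r ^ 2 + b ^ 2 ≠ 0 := by positivity
  have hratio : (r ^ 2 + a ^ 2) / (r ^ 2 + b ^ 2) - 1 = (a ^ 2 - b ^ 2) / (r ^ 2 + b ^ 2) := by
    field_simp; ring
  have := log_le_sub_one_of_pos (show 0 < (r ^ 2 + a ^ 2) / (r ^ 2 + b ^ 2) by positivity)
  rw [relEntropyIntegrand]
  linarith

lemma abs_log_one_add_sub_self_le {x : ℝ} (hx : 0 ≤ x) : |log (1 + x) - x| ≤ x ^ 2 := by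
  have hx1 : 0 < 1 + x := by linarith
  have upper := log_le_sub_one_of_pos hx1
  have lower := one_sub_inv_le_log_of_pos hx1
  have hgap : 1 - (1 + x)⁻¹ - (x - x ^ 2) = x ^ 3 / (1 + x) := by field_simp; ring
  have : 0 ≤ x ^ 3 / (1 + x) := by positivity
  rw [abs_le]; constructor <;> linarith

lemma tendsto_sq_mul_sub_cube_mul_log (m : ℝ) :
    Tendsto (fun r : ℝ => m ^ 2 * r - r ^ 3 * (log (r ^ 2 + m ^ 2) - log (r ^ 2))) atTop
      (𝓝 0) := by
  have hdecay : Tendsto (fun r : ℝ => m ^ 4 / r) atTop (𝓝 0) :=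
    tendsto_const_nhds.div_atTop tendsto_id
  refine squeeze_zero_norm' ?_ hdecay
  filter_upwards [eventually_gt_atTop 0] with r hr
  have hlog : log (r ^ 2 + m ^ 2) - log (r ^ 2) = log (1 + m ^ 2 / r ^ 2) := by
    rw [← log_div (by positivity) (by positivity)]; congr 1; field_simp
  have hbound := abs_log_one_add_sub_self_le (show 0 ≤ m ^ 2 / r ^ 2 by positivity)
  calc ‖m ^ 2 * r - r ^ 3 * (log (r ^ 2 + m ^ 2) - log (r ^ 2))‖
      = ‖r ^ 3 * (log (1 + m ^ 2 / r ^ 2) - m ^ 2 / r ^ 2)‖ := by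
        rw [hlog, ← norm_neg]; congr 1; field_simp; ring
    _ = r ^ 3 * |log (1 + m ^ 2 / r ^ 2) - m ^ 2 / r ^ 2| := by
        rw [norm_mul, Real.norm_eq_abs, Real.norm_eq_abs, abs_of_pos (pow_pos hr 3)]
    _ ≤ r ^ 3 * (m ^ 2 / r ^ 2) ^ 2 := by gcongr
    _ = m ^ 4 / r := by field_simp

noncomputable def relEntropyPrimitive (a b r : ℝ) : ℝ :=
  (a ^ 2 - b ^ 2) / 3 * r - r ^ 3 / 3 * (log (r ^ 2 + a ^ 2) - log (r ^ 2 + b ^ 2))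
    + 2 / 3 * a ^ 3 * arctan (r / a) - (2 / 3 * b ^ 3 + (a ^ 2 - b ^ 2) * b) * arctan (r / b)

lemma hasDerivAt_arctan_div {m : ℝ} (hm : m ≠ 0) (x : ℝ) :
    HasDerivAt (fun r => arctan (r / m)) (m / (x ^ 2 + m ^ 2)) x := by
  convert ((hasDerivAt_id' x).div_const m).arctan using 1
  field_simp
  ring

lemma hasDerivAt_log_sq_add {m : ℝ} (hm : m ≠ 0) (x : ℝ) :
    HasDerivAt (fun r => log (r ^ 2 + m ^ 2)) (2 * x / (x ^ 2 + m ^ 2)) x := by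
  convert ((hasDerivAt_pow 2 x).add_const (m ^ 2)).log (by positivity) using 1
  ring

lemma hasDerivAt_relEntropyPrimitive {a b : ℝ} (ha : 0 < a) (hb : 0 < b) (x : ℝ) :
    HasDerivAt (relEntropyPrimitive a b) (x ^ 2 * relEntropyIntegrand a b x) x := by
  have hx_a : x ^ 2 + a ^ 2 ≠ 0 := by positivity
  have hx_b : x ^ 2 + b ^ 2 ≠ 0 := by positivity
  have h := ((((hasDerivAt_id x).const_mul ((a ^ 2 - b ^ 2) / 3)).sub
    (((hasDerivAt_pow 3 x).div_const 3).mul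
      ((hasDerivAt_log_sq_add ha.ne' x).sub (hasDerivAt_log_sq_add hb.ne' x)))).add
    ((hasDerivAt_arctan_div ha.ne' x).const_mul (2 / 3 * a ^ 3))).sub
    ((hasDerivAt_arctan_div hb.ne' x).const_mul (2 / 3 * b ^ 3 + (a ^ 2 - b ^ 2) * b))
  refine h.congr_deriv ?_
  rw [relEntropyIntegrand, Pi.sub_apply, log_div hx_a hx_b]
  field_simp
  ring

lemma tendsto_relEntropyPrimitive {a b : ℝ} (ha : 0 < a) (hb : 0 < b) :
    Tendsto (relEntropyPrimitive a b) atTop (𝓝 ((2 * a + b) * (a - b) ^ 2 * π / 6)) := by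
  have arctan_lim {m : ℝ} (hm : 0 < m) :
      Tendsto (fun r => arctan (r / m)) atTop (𝓝 (π / 2)) :=
    (tendsto_arctan_atTop.mono_right nhdsWithin_le_nhds).comp (tendsto_id.atTop_div_const hm)
  have log_lim := ((tendsto_sq_mul_sub_cube_mul_log a).sub
    (tendsto_sq_mul_sub_cube_mul_log b)).div_const 3
  convert (log_lim.add ((arctan_lim ha).const_mul (2 / 3 * a ^ 3))).sub
    ((arctan_lim hb).const_mul (2 / 3 * b ^ 3 + (a ^ 2 - b ^ 2) * b)) using 1
  · ext r; rw [relEntropyPrimitive]; ring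
  · congr 1; ring

lemma integrableOn_sq_mul_relEntropyIntegrand {a b : ℝ} (ha : 0 < a) (hb : 0 < b) :
    IntegrableOn (fun r => r ^ 2 * relEntropyIntegrand a b r) (Ioi 0) :=
  integrableOn_Ioi_deriv_of_nonneg' (fun x _ => hasDerivAt_relEntropyPrimitive ha hb x)
    (fun x _ => mul_nonneg (sq_nonneg x) (relEntropyIntegrand_nonneg ha hb x))
    (tendsto_relEntropyPrimitive ha hb)

lemma integral_sq_mul_relEntropyIntegrand {a b : ℝ} (ha : 0 < a) (hb : 0 < b) :
    ∫ r in Ioi 0, r ^ 2 * relEntropyIntegrand a b r = (2 * a + b) * (a - b) ^ 2 * π / 6 := by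
  rw [integral_Ioi_of_hasDerivAt_of_nonneg' (fun x _ => hasDerivAt_relEntropyPrimitive ha hb x)
    (fun x _ => mul_nonneg (sq_nonneg x) (relEntropyIntegrand_nonneg ha hb x))
    (tendsto_relEntropyPrimitive ha hb)]
  simp [relEntropyPrimitive]

lemma measureReal_unitBall_fin_three :
    volume.real (ball (0 : EuclideanSpace ℝ (Fin 3)) 1) = 4 * π / 3 := by
  rw [measureReal_def, EuclideanSpace.volume_ball_fin_three, ENNReal.ofReal_one, one_pow, one_mul,
    ENNReal.toReal_ofReal (by positivity)]
  ring

/-- The infinite-volume relative entropy density in three dimensions equals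
`(2m₁ + m₂)(m₁ - m₂)²/(24π)`. -/
theorem relEntropy_density_three_dim (m₁ m₂ : ℝ) (h₁ : 0 < m₁) (h₂ : 0 < m₂) :
    Integrable (fun p : EuclideanSpace ℝ (Fin 3) =>
        (m₁ ^ 2 - m₂ ^ 2) / (‖p‖ ^ 2 + m₂ ^ 2)
          - Real.log ((‖p‖ ^ 2 + m₁ ^ 2) / (‖p‖ ^ 2 + m₂ ^ 2))) ∧
      (1 / 2) * ∫ p : EuclideanSpace ℝ (Fin 3), (1 / (2 * π) ^ 3) *
          ((m₁ ^ 2 - m₂ ^ 2) / (‖p‖ ^ 2 + m₂ ^ 2)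
            - Real.log ((‖p‖ ^ 2 + m₁ ^ 2) / (‖p‖ ^ 2 + m₂ ^ 2)))
        = (2 * m₁ + m₂) * (m₁ - m₂) ^ 2 / (24 * π) := by
  have hdim : Module.finrank ℝ (EuclideanSpace ℝ (Fin 3)) = 3 := finrank_euclideanSpace_fin
  constructor
  · change Integrable (fun p : EuclideanSpace ℝ (Fin 3) => relEntropyIntegrand m₁ m₂ ‖p‖)
    rw [integrable_fun_norm_addHaar, hdim]
    exact integrableOn_sq_mul_relEntropyIntegrand h₁ h₂
  · change (1 / 2) * ∫ p : EuclideanSpace ℝ (Fin 3),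
        (1 / (2 * π) ^ 3) * relEntropyIntegrand m₁ m₂ ‖p‖ = _
    rw [integral_const_mul, integral_fun_norm_addHaar, hdim, measureReal_unitBall_fin_three]
    simp only [Nat.reduceSub, smul_eq_mul, nsmul_eq_mul,
      integral_sq_mul_relEntropyIntegrand h₁ h₂]
    field_simp
    ring
end

section
/- Let A = (A_{ij}) be an n × n positive semidefinite complex Hermitian matrix. Then the entrywise exponential matrix M with M_{ij} = exp(A_{ij}) is also positive semidefinite. -/
open scoped ComplexOrder

/-!
Positive semidefiniteness is preserved by Hadamard products (Schur), so every Hadamard power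
`A ⊙ ⋯ ⊙ A` of a positive semidefinite `A` is positive semidefinite, the zeroth one being the
all-ones matrix `1 1ᴴ`. Since `exp` has nonnegative Taylor coefficients, the entrywise
exponential of `A` is a convergent sum of nonnegative multiples of these Hadamard powers, and the
positive semidefinite matrices form a closed convex cone.
-/

open Filter

namespace Matrix

section Closed

variable {ι R : Type*} [Ring R] [PartialOrder R] [StarRing R] [TopologicalSpace R]
  [IsTopologicalRing R] [ContinuousStar R] [T2Space R] [ClosedIciTopology R]

theorem isClosed_setOf_posSemidef : IsClosed {A : Matrix ι ι R | A.PosSemidef} := by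
  refine .inter (isClosed_eq (by fun_prop) continuous_id) ?_
  show IsClosed {A : Matrix ι ι R | ∀ x : ι →₀ R, _}
  simp only [Set.ofPred_forall]
  refine isClosed_iInter fun x => isClosed_Ici.preimage (f := fun A : Matrix ι ι R => _) ?_
  simp only [Finsupp.sum]
  fun_prop

theorem PosSemidef.of_hasSum [AddLeftMono R] {β : Type*} {F : β → Matrix ι ι R}
    {A : Matrix ι ι R} (hF : ∀ k, (F k).PosSemidef) (hA : HasSum F A) : A.PosSemidef :=
  isClosed_setOf_posSemidef.mem_of_tendsto hA
    (Eventually.of_forall fun s => posSemidef_sum s fun k _ => hF k)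

end Closed

variable {ι 𝕜 : Type*} [RCLike 𝕜] {A : Matrix ι ι 𝕜}

theorem posSemidef_of_const_one : (of fun _ _ => 1 : Matrix ι ι 𝕜).PosSemidef := by
  refine ⟨by ext; simp, fun x => ?_⟩
  simpa [Finsupp.sum, ← Finset.mul_sum, ← Finset.sum_mul, star_sum] using
    star_mul_self_nonneg (x.sum fun _ xi => xi)

theorem PosSemidef.map_pow (hA : A.PosSemidef) (k : ℕ) : (A.map (· ^ k)).PosSemidef := by
  induction k with
  | zero =>
    convert (posSemidef_of_const_one (ι := ι) (𝕜 := 𝕜)) using 1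
    ext; simp
  | succ k ih =>
    convert ih.hadamard hA using 1
    ext; simp [pow_succ]

theorem PosSemidef.map_of_hasSum {f : 𝕜 → 𝕜} {a : ℕ → 𝕜} (ha : ∀ k, 0 ≤ a k)
    (hf : ∀ z, HasSum (fun k => a k * z ^ k) (f z)) (hA : A.PosSemidef) :
    (A.map f).PosSemidef :=
  .of_hasSum (fun k => (hA.map_pow k).smul (ha k))
    (Pi.hasSum.2 fun i => Pi.hasSum.2 fun j => hf (A i j))

end Matrix

/-- The entrywise exponential of a positive semidefinite Hermitian matrix is
positive semidefinite (Schur product theorem applied to the power series of `exp`). -/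
theorem posSemidef_entrywise_exp {n : ℕ} (A : Matrix (Fin n) (Fin n) ℂ)
    (hA : A.PosSemidef) :
    (Matrix.of fun i j => Complex.exp (A i j)).PosSemidef := by
  refine hA.map_of_hasSum (a := fun k => (k.factorial : ℂ)⁻¹) (fun k => by positivity) fun z => ?_
  simpa [Complex.exp_eq_exp_ℂ, div_eq_inv_mul] using NormedSpace.expSeries_div_hasSum_exp z
end

section
/- Let a < b < c < d be real numbers and m > 0. For the 4 × 4 covariance matrix Σ_{AB} with entries Σ_{ij} = e^{−m|x_i − x_j|}/(2m), where (x₁, x₂, x₃, x₄) = (a, b, c, d), and the 2 × 2 blocks Σ_A (for points a, b) and Σ_B (for points c, d) defined analogously, one has (1/2) log( det Σ_A · det Σ_B / det Σ_{AB} ) = −(1/2) log(1 − e^{−2m(c−b)}). -/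
/-!
The kernel `e^{-m|x-y|}` is Markov: for `x ≤ y ≤ z` one has
`e^{-m(z-x)} = e^{-m(y-x)} e^{-m(z-y)}`. Hence, for ordered points `x₀ ≤ ⋯ ≤ xₙ`, subtracting
`e^{-m(x₁-x₀)}` times the second row of the kernel matrix from the first leaves the first row
equal to `(1 - e^{-2m(x₁-x₀)}, 0, …, 0)`, and by induction the determinant is
`∏ᵢ (1 - e^{-2m(xᵢ₊₁-xᵢ)})`. In the ratio `det Σ_A det Σ_B / det Σ_AB` the factors of the gaps
`b - a` and `d - c` and the powers of `2m` cancel, leaving `(1 - e^{-2m(c-b)})⁻¹`.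
-/

open Matrix Real

noncomputable def expKernelMatrix {n : ℕ} (m : ℝ) (x : Fin n → ℝ) : Matrix (Fin n) (Fin n) ℝ :=
  of fun i j => exp (-m * |x i - x j|)

theorem exp_neg_mul_abs_sub_eq_mul (m : ℝ) {x y z : ℝ} (hxy : x ≤ y) (hyz : y ≤ z) :
    exp (-m * |x - z|) = exp (-m * |x - y|) * exp (-m * |y - z|) := by
  rw [abs_sub_comm x z, abs_sub_comm x y, abs_sub_comm y z, abs_of_nonneg (by linarith),
    abs_of_nonneg (by linarith), abs_of_nonneg (by linarith), ← exp_add]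
  ring_nf

theorem det_expKernelMatrix (m : ℝ) :
    ∀ {n : ℕ} (x : Fin (n + 1) → ℝ), Monotone x →
      (expKernelMatrix m x).det = ∏ i : Fin n, (1 - exp (-2 * m * (x i.succ - x i.castSucc)))
  | 0, x, _ => by simp [expKernelMatrix, det_unique]
  | n + 1, x, hx => by
    set A := expKernelMatrix m x
    set r := exp (-m * |x 0 - x 1|)
    set B := A.updateRow 0 (A 0 + (-r) • A 1)
    have hB_zero (j) : B 0 j = exp (-m * |x 0 - x j|) - r * exp (-m * |x 1 - x j|) := by
      simp only [B, A, updateRow_self, Pi.add_apply, Pi.smul_apply, smul_eq_mul, expKernelMatrix,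
        of_apply]
      ring
    have hB_zero_zero : B 0 0 = 1 - exp (-2 * m * (x 1 - x 0)) := by
      rw [hB_zero, sub_self, abs_zero, mul_zero, exp_zero, ← exp_add, abs_sub_comm (x 1),
        abs_sub_comm, abs_of_nonneg (sub_nonneg.2 (hx (Fin.zero_le 1)))]
      ring_nf
    have hB_zero_succ (j : Fin (n + 1)) : B 0 j.succ = 0 := by
      have h1j : (1 : Fin (n + 2)) ≤ j.succ := Fin.one_le_of_ne_zero (Fin.succ_ne_zero j)
      rw [hB_zero, exp_neg_mul_abs_sub_eq_mul m (hx (Fin.zero_le 1)) (hx h1j), sub_self]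
    have hB_minor : B.submatrix Fin.succ Fin.succ = expKernelMatrix m (x ∘ Fin.succ) := by
      ext i j
      simp [B, A, expKernelMatrix]
    calc A.det = B.det := (det_updateRow_add_smul_self A Fin.zero_ne_one (-r)).symm
      _ = B 0 0 * (B.submatrix Fin.succ Fin.succ).det := by
        simp [det_succ_row_zero B, Fin.sum_univ_succ, hB_zero_succ]
      _ = _ := by
        rw [hB_zero_zero, hB_minor, det_expKernelMatrix m _ (hx.comp Fin.strictMono_succ.monotone),
          Fin.prod_univ_succ]
        simp only [Function.comp_apply, Fin.succ_castSucc, Fin.castSucc_zero, Fin.succ_zero_eq_one]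

theorem det_of_div_const {ι K : Type*} [Fintype ι] [DecidableEq ι] [Field K] (f : ι → ι → K)
    (c : K) : (of fun i j => f i j / c).det = (of f).det / c ^ Fintype.card ι := by
  rw [show (of fun i j => f i j / c) = c⁻¹ • of f by ext; simp [div_eq_inv_mul], det_smul, inv_pow,
    div_eq_inv_mul]

theorem det_of_exp_neg_mul_abs_sub_div (m : ℝ) {n : ℕ} (x : Fin (n + 1) → ℝ) (hx : Monotone x) :
    (of fun i j => exp (-m * |x i - x j|) / (2 * m)).det
      = (∏ i : Fin n, (1 - exp (-2 * m * (x i.succ - x i.castSucc)))) / (2 * m) ^ (n + 1) := by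
  rw [det_of_div_const, Fintype.card_fin, ← det_expKernelMatrix m x hx]
  rfl

theorem one_sub_exp_neg_pos {m x y : ℝ} (hm : 0 < m) (hxy : x < y) :
    0 < 1 - exp (-2 * m * (y - x)) :=
  sub_pos.2 (exp_lt_one_iff.2 (by nlinarith))

/-- Mutual information between the boundary fields of `(a,b)` and `(c,d)` for the
one-dimensional free scalar field of mass `m`: the log-determinant ratio equals
`-(1/2) log(1 - e^{-2m(c-b)})`. -/
theorem mutual_information_intervals (a b c d m : ℝ)
    (hab : a < b) (hbc : b < c) (hcd : c < d) (hm : 0 < m) :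
    (1 / 2) * Real.log
        ((Matrix.of fun i j : Fin 2 =>
            Real.exp (-m * |![a, b] i - ![a, b] j|) / (2 * m)).det *
          (Matrix.of fun i j : Fin 2 =>
            Real.exp (-m * |![c, d] i - ![c, d] j|) / (2 * m)).det /
          (Matrix.of fun i j : Fin 4 =>
            Real.exp (-m * |![a, b, c, d] i - ![a, b, c, d] j|) / (2 * m)).det)
      = -(1 / 2) * Real.log (1 - Real.exp (-2 * m * (c - b))) := by
  have hmono_ab : Monotone ![a, b] := Fin.monotone_iff_le_succ.2 <| by simp [hab.le]
  have hmono_cd : Monotone ![c, d] := Fin.monotone_iff_le_succ.2 <| by simp [hcd.le]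
  have hmono_abcd : Monotone ![a, b, c, d] := Fin.monotone_iff_le_succ.2 <| by
    simp [Fin.forall_fin_succ, hab.le, hbc.le, hcd.le]
  rw [det_of_exp_neg_mul_abs_sub_div m _ hmono_ab, det_of_exp_neg_mul_abs_sub_div m _ hmono_cd,
    det_of_exp_neg_mul_abs_sub_div m _ hmono_abcd]
  simp only [Fin.prod_univ_succ, Fin.prod_univ_zero, ← Fin.succ_castSucc, Fin.castSucc_zero,
    cons_val_succ, cons_val_zero, mul_one]
  have hp := (one_sub_exp_neg_pos hm hab).ne'
  have hq := (one_sub_exp_neg_pos hm hbc).ne'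
  have hr := (one_sub_exp_neg_pos hm hcd).ne'
  rw [neg_mul (1 / 2 : ℝ), ← mul_neg, ← log_inv]
  congr 2
  generalize 1 - exp (-2 * m * (b - a)) = p at hp ⊢
  generalize 1 - exp (-2 * m * (c - b)) = q at hq ⊢
  generalize 1 - exp (-2 * m * (d - c)) = r at hr ⊢
  field_simp
  ring
end
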